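/- arXiv:1304.3913 — 5 statements merged into one kernel-verified Lean document; each statement's English description precedes it below -/
import Mathlib

section
/- For every x ∈ Mat_ℓ(ℂ), every r ≥ 1, every y_1,…,y_r ∈ Mat_ℓ(ℂ), and all 1 ≤ i,j,h,k ≤ m+n, the following identity holds in U: t_{ij}(x)·t_{hk}(y_1⊗⋯⊗y_r) − (−1)^{(p(i)+p(j))(p(h)+p(k))}·t_{hk}(y_1⊗⋯⊗y_r)·t_{ij}(x) = (−1)^{p(i)p(j)+p(i)p(h)+p(j)p(h)} Σ_{s=1}^{r} [ t_{hj}(y_1⊗⋯⊗y_{s−1})·t_{ik}((x·y_s)⊗y_{s+1}⊗⋯⊗y_r) − t_{hj}(y_1⊗⋯⊗y_{s−1}⊗(y_s·x))·t_{ik}(y_{s+1}⊗⋯⊗y_r) ], where x·y_s and y_s·x are matrix products in Mat_ℓ(ℂ). -/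
open scoped BigOperators Classical

noncomputable section

abbrev Box (m n ℓ : ℕ) := Fin (m + n) × Fin ℓ

/-- The sign `(-1)^ε` for `ε ∈ ℤ/2ℤ`. -/
def sgn (ε : ZMod 2) : ℂ := if ε = 0 then 1 else -1

/-- The defining super-commutation relations of `U(gl_{mℓ|nℓ})` on the free
algebra generated by the symbols `E_{a,b}`, `a, b ∈ J`. -/
inductive SRel (m n ℓ : ℕ) (p : Fin (m + n) → ZMod 2) :
    FreeAlgebra ℂ (Box m n ℓ × Box m n ℓ) →
    FreeAlgebra ℂ (Box m n ℓ × Box m n ℓ) → Prop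
  | super (a b c d : Box m n ℓ) :
      SRel m n ℓ p (FreeAlgebra.ι ℂ (a, b) * FreeAlgebra.ι ℂ (c, d))
        (sgn ((p a.1 + p b.1) * (p c.1 + p d.1)) •
            (FreeAlgebra.ι ℂ (c, d) * FreeAlgebra.ι ℂ (a, b)) +
          (if b = c then FreeAlgebra.ι ℂ (a, d) else 0) -
          sgn ((p a.1 + p b.1) * (p c.1 + p d.1)) •
            (if a = d then FreeAlgebra.ι ℂ (c, b) else 0))

/-- The universal enveloping superalgebra `U = U(gl_{mℓ|nℓ})`. -/
abbrev U (m n ℓ : ℕ) (p : Fin (m + n) → ZMod 2) := RingQuot (SRel m n ℓ p)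

/-- The generator `E_{a,b}` of `U`. -/
def gen (m n ℓ : ℕ) (p : Fin (m + n) → ZMod 2) (a b : Box m n ℓ) : U m n ℓ p :=
  RingQuot.mkAlgHom ℂ (SRel m n ℓ p) (FreeAlgebra.ι ℂ (a, b))


/-- The matrix of maps `t_{ij}` on `Mat_ℓ(ℂ)`:
`t_{ij}(x) = (-1)^{p(i)} Σ_{a,b} x_{a,b} E_{i⋆a,j⋆b}` (linear extension to
`Mat_ℓ(ℂ)` of `t_{ij}(e_{a,b}) = (-1)^{p(i)} E_{i⋆a,j⋆b}`). -/
def tMat (m n ℓ : ℕ) (p : Fin (m + n) → ZMod 2) :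
    Matrix (Fin ℓ) (Fin ℓ) ℂ →ₗ[ℂ]
      Matrix (Fin (m + n)) (Fin (m + n)) (U m n ℓ p) where
  toFun x := Matrix.of fun i j =>
    sgn (p i) • ∑ a : Fin ℓ, ∑ b : Fin ℓ, x a b • gen m n ℓ p (i, a) (j, b)
  map_add' x y := by
    ext i j
    simp [Matrix.add_apply, add_smul, Finset.sum_add_distrib, smul_add]
  map_smul' c x := by
    ext i j
    simp only [Matrix.smul_apply, smul_eq_mul, mul_smul, ← Finset.smul_sum,
      Matrix.of_apply, RingHom.id_apply]
    rw [smul_comm]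

/-- The algebra homomorphism `Φ : T(Mat_ℓ(ℂ)) → Mat_{m+n}(U)` extending the
maps `t_{ij}`; by definition of `t_{ij}` on tensors,
`t_{ij}(x_1 ⊗ ⋯ ⊗ x_r) = (Φ(x_1 ⊗ ⋯ ⊗ x_r))_{ij}`. -/
def Phi (m n ℓ : ℕ) (p : Fin (m + n) → ZMod 2) :
    TensorAlgebra ℂ (Matrix (Fin ℓ) (Fin ℓ) ℂ) →ₐ[ℂ]
      Matrix (Fin (m + n)) (Fin (m + n)) (U m n ℓ p) :=
  TensorAlgebra.lift ℂ (tMat m n ℓ p)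

/-- The pure tensor `x_1 ⊗ ⋯ ⊗ x_r` in the tensor algebra, given as a list. -/
def TT (ℓ : ℕ) (xs : List (Matrix (Fin ℓ) (Fin ℓ) ℂ)) :
    TensorAlgebra ℂ (Matrix (Fin ℓ) (Fin ℓ) ℂ) :=
  (xs.map fun y => TensorAlgebra.ι ℂ y).prod

/-!
The supercommutator with `t_{ij}(x)` is a super-derivation, and
`t_{hk}(y_1 ⊗ ⋯ ⊗ y_r) = Σ_u t_{hu}(y_1) t_{uk}(y_2 ⊗ ⋯ ⊗ y_r)`. Hence the identity follows by
induction on `r`: the derivation rule splits the supercommutator into the case `r = 1` (the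
`s = 1` summand) and `t_{hu}(y_1)` times the identity for `y_2 ⊗ ⋯ ⊗ y_r` (the other summands).
The case `r = 1` is bilinear in `(x, y)`, so it suffices to check it on matrix units, where it
is the defining relation of `U`.
-/

lemma sgn_add (a b : ZMod 2) : sgn (a + b) = sgn a * sgn b := by
  have h01 (c : ZMod 2) : c = 0 ∨ c = 1 := by revert c; decide
  rcases h01 a with rfl | rfl <;> rcases h01 b with rfl | rfl <;>
    simp [sgn, show (1 : ZMod 2) + 1 = 0 from rfl]

lemma sum_take_get_drop_cons {α M : Type*} [AddCommMonoid M] (F : List α → α → List α → M)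
    (y : α) (t : List α) :
    ∑ s : Fin (y :: t).length, F ((y :: t).take s) ((y :: t).get s) ((y :: t).drop (s + 1)) =
      F [] y t + ∑ s : Fin t.length, F (y :: t.take s) (t.get s) (t.drop (s + 1)) := by
  simp [Fin.sum_univ_succ]

section Supercommutator

variable {R : Type*} [Ring R] [Algebra ℂ R]

/-- `ε` stands for the product of the parities of `X` and `A`. -/
def scomm (ε : ZMod 2) (X A : R) : R := X * A - sgn ε • (A * X)

lemma scomm_mul (ε₁ ε₂ : ZMod 2) (X A B : R) :
    scomm (ε₁ + ε₂) X (A * B) =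
      scomm ε₁ X A * B + sgn ε₁ • (A * scomm ε₂ X B) := by
  simp only [scomm, sgn_add, sub_mul, mul_sub, smul_sub, smul_mul_assoc, mul_smul_comm, smul_smul,
    mul_assoc]
  abel

lemma scomm_sum {ι : Type*} (ε : ZMod 2) (X : R) (s : Finset ι) (f : ι → R) :
    scomm ε X (∑ i ∈ s, f i) = ∑ i ∈ s, scomm ε X (f i) := by
  simp only [scomm, Finset.mul_sum, Finset.sum_mul, Finset.smul_sum, Finset.sum_sub_distrib]

lemma scomm_zero_one (X : R) : scomm 0 X 1 = 0 := by
  simp [scomm, sgn]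

end Supercommutator

section Generators

variable {m n ℓ : ℕ} {p : Fin (m + n) → ZMod 2}

lemma gen_mul_gen (a b c d : Box m n ℓ) :
    gen m n ℓ p a b * gen m n ℓ p c d =
      sgn ((p a.1 + p b.1) * (p c.1 + p d.1)) • (gen m n ℓ p c d * gen m n ℓ p a b) +
        (if b = c then gen m n ℓ p a d else 0) -
        sgn ((p a.1 + p b.1) * (p c.1 + p d.1)) • (if a = d then gen m n ℓ p c b else 0) := by
  simpa [gen, apply_ite (RingQuot.mkAlgHom ℂ (SRel m n ℓ p))] using
    RingQuot.mkAlgHom_rel ℂ (SRel.super (p := p) a b c d)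

lemma tMat_single (a b : Fin ℓ) (c : ℂ) (i j : Fin (m + n)) :
    tMat m n ℓ p (Matrix.single a b c) i j = (sgn (p i) * c) • gen m n ℓ p (i, a) (j, b) := by
  simp [tMat, Matrix.single_apply, ite_smul, ite_and, Finset.sum_ite_eq, mul_smul]

lemma tMat_single_mul_single (a b c d : Fin ℓ) (i k : Fin (m + n)) :
    tMat m n ℓ p (Matrix.single a b 1 * Matrix.single c d 1) i k =
      if b = c then sgn (p i) • gen m n ℓ p (i, a) (k, d) else 0 := by
  obtain rfl | hbc := eq_or_ne b c
  · simp [tMat_single]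
  · simp [hbc]

lemma tMat_single_mul_tMat_single (a b c d : Fin ℓ) (i j h k : Fin (m + n)) :
    tMat m n ℓ p (Matrix.single a b 1) i j * tMat m n ℓ p (Matrix.single c d 1) h k =
      sgn ((p i + p j) * (p h + p k)) •
          (tMat m n ℓ p (Matrix.single c d 1) h k * tMat m n ℓ p (Matrix.single a b 1) i j) +
        (if j = h then sgn (p i * p j + p i * p h + p j * p h) else 0) •
          tMat m n ℓ p (Matrix.single a b 1 * Matrix.single c d 1) i k +
        (if i = k then -sgn (p i * p j + p i * p h + p j * p h) else 0) •
          tMat m n ℓ p (Matrix.single c d 1 * Matrix.single a b 1) h j := by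
  have hjh : (sgn (p i) * sgn (p h)) •
      (if ((j, b) : Box m n ℓ) = (h, c) then gen m n ℓ p (i, a) (k, d) else 0) =
      (if j = h then sgn (p i * p j + p i * p h + p j * p h) else 0) •
        tMat m n ℓ p (Matrix.single a b 1 * Matrix.single c d 1) i k := by
    rw [tMat_single_mul_single]
    obtain rfl | hjh := eq_or_ne j h
    · have hsgn : sgn (p i * p j + p i * p j + p j * p j) = sgn (p j) :=
        congrArg sgn <| (by decide : ∀ a b : ZMod 2, a * b + a * b + b * b = b) _ _
      simp [hsgn, smul_smul, mul_comm]
    · simp [hjh]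
  have hik : (sgn (p i) * sgn (p h)) • sgn ((p i + p j) * (p h + p k)) •
      (if ((i, a) : Box m n ℓ) = (k, d) then gen m n ℓ p (h, c) (j, b) else 0) =
      (if i = k then sgn (p i * p j + p i * p h + p j * p h) else 0) •
        tMat m n ℓ p (Matrix.single c d 1 * Matrix.single a b 1) h j := by
    rw [tMat_single_mul_single]
    obtain rfl | hik := eq_or_ne i k
    · have hsgn : sgn (p i) * sgn ((p i + p j) * (p h + p i)) =
          sgn (p i * p j + p i * p h + p j * p h) := by
        rw [← sgn_add]
        exact congrArg sgn <| (by decide : ∀ a b c : ZMod 2,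
          a + (a + b) * (c + a) = a * b + a * c + b * c) _ _ _
      obtain rfl | had := eq_or_ne a d
      · simp [← hsgn, smul_smul, mul_right_comm]
      · simp [had, Ne.symm had]
    · simp [hik]
  simp only [tMat_single, mul_one]
  rw [smul_mul_smul_comm, gen_mul_gen, smul_mul_smul_comm]
  dsimp only
  rw [smul_sub, smul_add, hjh, hik]
  split_ifs <;> module

lemma scomm_tMat (x y : Matrix (Fin ℓ) (Fin ℓ) ℂ) (i j h k : Fin (m + n)) :
    scomm ((p i + p j) * (p h + p k)) (tMat m n ℓ p x i j) (tMat m n ℓ p y h k) =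
      sgn (p i * p j + p i * p h + p j * p h) •
        ((if j = h then tMat m n ℓ p (x * y) i k else 0) -
          (if i = k then tMat m n ℓ p (y * x) h j else 0)) := by
  let T (a b : Fin (m + n)) : Matrix (Fin ℓ) (Fin ℓ) ℂ →ₗ[ℂ] U m n ℓ p :=
    Matrix.entryLinearMap ℂ _ a b ∘ₗ tMat m n ℓ p
  -- No subtraction here: instance search does not find `Sub` on bilinear maps into `U`.
  have hbil : (LinearMap.mul ℂ _).compl₁₂ (T i j) (T h k) =
      sgn ((p i + p j) * (p h + p k)) • (LinearMap.mul ℂ _).flip.compl₁₂ (T i j) (T h k) +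
      (if j = h then sgn (p i * p j + p i * p h + p j * p h) else 0) •
        (LinearMap.mul ℂ _).compr₂ (T i k) +
      (if i = k then -sgn (p i * p j + p i * p h + p j * p h) else 0) •
        (LinearMap.mul ℂ _).flip.compr₂ (T h j) := by
    refine LinearMap.ext_basis (Matrix.stdBasis ℂ _ _) (Matrix.stdBasis ℂ _ _)
      fun ⟨a, b⟩ ⟨c, d⟩ => ?_
    simpa only [T, Matrix.stdBasis_eq_single, LinearMap.compl₁₂_apply, LinearMap.mul_apply',
      LinearMap.flip_apply, LinearMap.compr₂_apply, LinearMap.add_apply, LinearMap.smul_apply,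
      LinearMap.comp_apply, Matrix.entryLinearMap_apply] using
      tMat_single_mul_tMat_single a b c d i j h k
  have hxy := LinearMap.congr_fun₂ hbil x y
  simp only [T, LinearMap.compl₁₂_apply, LinearMap.mul_apply', LinearMap.flip_apply,
    LinearMap.compr₂_apply, LinearMap.add_apply, LinearMap.smul_apply, LinearMap.comp_apply,
    Matrix.entryLinearMap_apply] at hxy
  rw [scomm, hxy]
  split_ifs <;> module

end Generators
section Tensors

variable {m n ℓ : ℕ} {p : Fin (m + n) → ZMod 2}

lemma Phi_TT_nil : Phi m n ℓ p (TT ℓ []) = 1 := by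
  simp [TT]

lemma Phi_TT_cons (y : Matrix (Fin ℓ) (Fin ℓ) ℂ) (t : List (Matrix (Fin ℓ) (Fin ℓ) ℂ)) :
    Phi m n ℓ p (TT ℓ (y :: t)) = tMat m n ℓ p y * Phi m n ℓ p (TT ℓ t) := by
  simp [TT, Phi]

lemma Phi_TT_singleton (y : Matrix (Fin ℓ) (Fin ℓ) ℂ) :
    Phi m n ℓ p (TT ℓ [y]) = tMat m n ℓ p y := by
  rw [Phi_TT_cons, Phi_TT_nil, mul_one]

variable (p) in
/-- The summand of the right-hand side for the splitting `ys = A ++ z :: B`. -/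
def scommTerm (x : Matrix (Fin ℓ) (Fin ℓ) ℂ) (i j h k : Fin (m + n))
    (A : List (Matrix (Fin ℓ) (Fin ℓ) ℂ)) (z : Matrix (Fin ℓ) (Fin ℓ) ℂ)
    (B : List (Matrix (Fin ℓ) (Fin ℓ) ℂ)) : U m n ℓ p :=
  Phi m n ℓ p (TT ℓ A) h j * Phi m n ℓ p (TT ℓ ((x * z) :: B)) i k -
    Phi m n ℓ p (TT ℓ (A ++ [z * x])) h j * Phi m n ℓ p (TT ℓ B) i k

lemma scommTerm_cons (x y z : Matrix (Fin ℓ) (Fin ℓ) ℂ) (i j h k : Fin (m + n))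
    (A B : List (Matrix (Fin ℓ) (Fin ℓ) ℂ)) :
    scommTerm p x i j h k (y :: A) z B =
      ∑ u, tMat m n ℓ p y h u * scommTerm p x i j u k A z B := by
  simp only [scommTerm, List.cons_append, Phi_TT_cons, Matrix.mul_apply, Finset.sum_mul,
    mul_sub, mul_assoc, Finset.sum_sub_distrib]

lemma sum_scomm_tMat_mul_Phi_TT (x y : Matrix (Fin ℓ) (Fin ℓ) ℂ)
    (t : List (Matrix (Fin ℓ) (Fin ℓ) ℂ)) (i j h k : Fin (m + n)) :
    ∑ u, scomm ((p i + p j) * (p h + p u)) (tMat m n ℓ p x i j) (tMat m n ℓ p y h u) *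
        Phi m n ℓ p (TT ℓ t) u k =
      sgn (p i * p j + p i * p h + p j * p h) • scommTerm p x i j h k [] y t := by
  simp only [scomm_tMat, smul_mul_assoc, ← Finset.smul_sum, sub_mul, Finset.sum_sub_distrib,
    ite_mul, zero_mul, Finset.sum_ite_eq, Finset.mem_univ, if_true]
  rw [scommTerm, Phi_TT_nil, List.nil_append, Phi_TT_singleton, Phi_TT_cons, Matrix.one_apply]
  obtain rfl | hjh := eq_or_ne j h
  · simp [Matrix.mul_apply]
  · simp [hjh, Ne.symm hjh]

theorem scomm_tMat_Phi_TT (x : Matrix (Fin ℓ) (Fin ℓ) ℂ) (i j : Fin (m + n)) :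
    ∀ (ys : List (Matrix (Fin ℓ) (Fin ℓ) ℂ)) (h k : Fin (m + n)),
    scomm ((p i + p j) * (p h + p k)) (tMat m n ℓ p x i j) (Phi m n ℓ p (TT ℓ ys) h k) =
      sgn (p i * p j + p i * p h + p j * p h) •
        ∑ s : Fin ys.length,
          scommTerm p x i j h k (ys.take s) (ys.get s) (ys.drop (s + 1))
  | [], h, k => by
    obtain rfl | hhk := eq_or_ne h k
    · simp [Phi_TT_nil, scomm_zero_one, show p h + p h = 0 from CharTwo.add_self_eq_zero _]
    · simp [Phi_TT_nil, hhk, scomm]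
  | y :: t, h, k => by
    have hsplit (u : Fin (m + n)) : (p i + p j) * (p h + p k) =
        (p i + p j) * (p h + p u) + (p i + p j) * (p u + p k) :=
      (by decide : ∀ a b c d e : ZMod 2,
        (a + b) * (c + e) = (a + b) * (c + d) + (a + b) * (d + e)) _ _ _ _ _
    have hsgn (u : Fin (m + n)) :
        sgn ((p i + p j) * (p h + p u)) * sgn (p i * p j + p i * p u + p j * p u) =
          sgn (p i * p j + p i * p h + p j * p h) := by
      rw [← sgn_add]
      exact congrArg sgn <| (by decide : ∀ a b c d : ZMod 2,
        (a + b) * (c + d) + (a * b + a * d + b * d) = a * b + a * c + b * c) _ _ _ _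
    have hstep (u : Fin (m + n)) :
        scomm ((p i + p j) * (p h + p k)) (tMat m n ℓ p x i j)
          (tMat m n ℓ p y h u * Phi m n ℓ p (TT ℓ t) u k) =
        scomm ((p i + p j) * (p h + p u)) (tMat m n ℓ p x i j) (tMat m n ℓ p y h u) *
            Phi m n ℓ p (TT ℓ t) u k +
          sgn (p i * p j + p i * p h + p j * p h) • (tMat m n ℓ p y h u *
            ∑ s : Fin t.length, scommTerm p x i j u k (t.take s) (t.get s) (t.drop (s + 1))) := by
      rw [hsplit u, scomm_mul, scomm_tMat_Phi_TT x i j t, mul_smul_comm, smul_smul, hsgn]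
    rw [Phi_TT_cons, Matrix.mul_apply, scomm_sum, Finset.sum_congr rfl fun u _ => hstep u,
      Finset.sum_add_distrib, sum_scomm_tMat_mul_Phi_TT, sum_take_get_drop_cons, smul_add,
      ← Finset.smul_sum]
    simp_rw [Finset.mul_sum, scommTerm_cons]
    rw [Finset.sum_comm]

end Tensors

theorem stmt2_general (m n ℓ : ℕ)
    (p : Fin (m + n) → ZMod 2)
    (x : Matrix (Fin ℓ) (Fin ℓ) ℂ) (ys : List (Matrix (Fin ℓ) (Fin ℓ) ℂ))
    (i j h k : Fin (m + n)) :
    Phi m n ℓ p (TT ℓ [x]) i j * Phi m n ℓ p (TT ℓ ys) h k -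
        sgn ((p i + p j) * (p h + p k)) •
          (Phi m n ℓ p (TT ℓ ys) h k * Phi m n ℓ p (TT ℓ [x]) i j) =
      sgn (p i * p j + p i * p h + p j * p h) •
        ∑ s : Fin ys.length,
          (Phi m n ℓ p (TT ℓ (ys.take (s : ℕ))) h j *
              Phi m n ℓ p (TT ℓ ((x * ys.get s) :: ys.drop ((s : ℕ) + 1))) i k -
            Phi m n ℓ p (TT ℓ (ys.take (s : ℕ) ++ [ys.get s * x])) h j *
              Phi m n ℓ p (TT ℓ (ys.drop ((s : ℕ) + 1))) i k) := by
  rw [Phi_TT_singleton]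
  exact scomm_tMat_Phi_TT x i j ys h k

/-- the supercommutator identity for the maps `t_{ij}`:
`[t_{ij}(x), t_{hk}(y_1 ⊗ ⋯ ⊗ y_r)] = (-1)^{p(i)p(j)+p(i)p(h)+p(j)p(h)}
Σ_{s=1}^r (t_{hj}(y_1⊗⋯⊗y_{s-1}) t_{ik}(xy_s⊗⋯⊗y_r) -
t_{hj}(y_1⊗⋯⊗y_s x) t_{ik}(y_{s+1}⊗⋯⊗y_r))`. -/
theorem stmt2 (m n ℓ : ℕ) (hℓ : 0 < ℓ) (hmn : 0 < m + n)
    (p : Fin (m + n) → ZMod 2)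
    (hp : (Finset.univ.filter fun i => p i = 0).card = m)
    (x : Matrix (Fin ℓ) (Fin ℓ) ℂ) (ys : List (Matrix (Fin ℓ) (Fin ℓ) ℂ))
    (hys : ys ≠ []) (i j h k : Fin (m + n)) :
    Phi m n ℓ p (TT ℓ [x]) i j * Phi m n ℓ p (TT ℓ ys) h k -
        sgn ((p i + p j) * (p h + p k)) •
          (Phi m n ℓ p (TT ℓ ys) h k * Phi m n ℓ p (TT ℓ [x]) i j) =
      sgn (p i * p j + p i * p h + p j * p h) •
        ∑ s : Fin ys.length,
          (Phi m n ℓ p (TT ℓ (ys.take (s : ℕ))) h j *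
              Phi m n ℓ p (TT ℓ ((x * ys.get s) :: ys.drop ((s : ℕ) + 1))) i k -
            Phi m n ℓ p (TT ℓ (ys.take (s : ℕ) ++ [ys.get s * x])) h j *
              Phi m n ℓ p (TT ℓ (ys.drop ((s : ℕ) + 1))) i k) :=
  stmt2_general m n ℓ p x ys i j h k

end
end

section
/- For all 1 ≤ i,j ≤ m+n and 1 ≤ c ≤ ℓ−1, the following two elements of U lie in the left ideal I_χ: (i) t_{ij}(e_{c+1,c}) − δ_{ij}, and (ii) t_{ij}(e_{c+1,c}⊗e_{c+1,c+1}) + ρ_{c+1}·t_{ij}(e_{c+1,c}) − t_{ij}(e_{c+1,c+1}) − δ_{ij}ρ_c. Equivalently, t_{ij}(e_{c+1,c}(u+e_{c+1,c+1}+ρ_{c+1})) − t_{ij}(u+e_{c+1,c+1}+ρ_c) ≡ 0 modulo I_χ[u], where u is a polynomial variable. -/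
open scoped BigOperators Classical

noncomputable section

/-- `χ(E_{a,b}) = (-1)^{p(a)}` if `row(a) = row(b)`, `col(a) = col(b) + 1`, else `0`. -/
def chiv (m n ℓ : ℕ) (p : Fin (m + n) → ZMod 2) (a b : Box m n ℓ) : ℂ :=
  if a.1 = b.1 ∧ (a.2 : ℕ) = (b.2 : ℕ) + 1 then sgn (p a.1) else 0

/-- The left ideal `I_χ` of `U` generated by the elements `E_{a,b} - χ(E_{a,b})`
over boxes with `col(a) > col(b)`. -/
def Ichi (m n ℓ : ℕ) (p : Fin (m + n) → ZMod 2) : Ideal (U m n ℓ p) :=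
  Ideal.span {u : U m n ℓ p | ∃ a b : Box m n ℓ, (b.2 : ℕ) < (a.2 : ℕ) ∧
    u = gen m n ℓ p a b - algebraMap ℂ (U m n ℓ p) (chiv m n ℓ p a b)}

/-- `ρ_r = -(ℓ-r)(m-n)`, with `c : Fin ℓ` the 0-based column (so `r = c+1`). -/
def ρC (m n ℓ : ℕ) (c : Fin ℓ) : ℂ :=
  -(((ℓ : ℂ) - ((c : ℕ) + 1)) * ((m : ℂ) - (n : ℂ)))

/-- `Ẽ_{a,b} = (-1)^{col(b)-col(a)} (E_{a,b} + δ_{a,b} (-1)^{p(a)} ρ_{col(a)} 1)`. -/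
def EtilU (m n ℓ : ℕ) (p : Fin (m + n) → ZMod 2) (a b : Box m n ℓ) : U m n ℓ p :=
  ((-1 : ℂ) ^ ((a.2 : ℕ) + (b.2 : ℕ))) •
    (gen m n ℓ p a b +
      (if a = b then sgn (p a.1) * ρC m n ℓ a.2 else 0) • (1 : U m n ℓ p))


/-
Everything follows from the congruence `x * E_{a,b} ≡ χ(E_{a,b}) x` modulo the left ideal `I_χ`,
valid whenever `col a > col b`; (i) is the case `x = 1`. For (ii), write
`t_{ij}(e_{c+1,c} ⊗ e_{c+1,c+1}) = Σ_k ± E_{i⋆(c+1),k⋆c} E_{k⋆(c+1),j⋆(c+1)}` and use the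
supercommutation relation to move `E_{i⋆(c+1),k⋆c}` to the right: there it becomes `χ`, which
survives only for `k = i` and gives back `t_{ij}(e_{c+1,c+1})`, while the commutator terms
`E_{k⋆(c+1),k⋆c}` add up to `-δ_{ij} Σ_k (-1)^{p(k)} = -δ_{ij} (m - n)`. This is cancelled by
`ρ_{c+1} - ρ_c = m - n`.
-/

lemma sgn_zero : sgn 0 = 1 := if_pos rfl

lemma sgn_one : sgn 1 = -1 := if_neg (by decide)

lemma sgn_mul_self (a : ZMod 2) : sgn a * sgn a = 1 := by
  rw [← sgn_add, CharTwo.add_self_eq_zero, sgn_zero]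

lemma sgn_add_mul_add_comm (a b : ZMod 2) : sgn ((a + b) * (b + a)) = sgn a * sgn b := by
  rw [add_comm b, ← sq, ZMod.pow_card, sgn_add]

lemma sgn_add_self_mul (a b : ZMod 2) : sgn ((a + a) * b) = 1 := by
  rw [CharTwo.add_self_eq_zero, zero_mul, sgn_zero]

lemma sum_sgn {m n : ℕ} (p : Fin (m + n) → ZMod 2)
    (hp : (Finset.univ.filter fun i => p i = 0).card = m) :
    ∑ k, sgn (p k) = (m : ℂ) - n := by
  have hcard := Finset.card_filter_add_card_filter_not (s := Finset.univ) (fun k => p k = 0)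
  rw [Finset.card_univ, Fintype.card_fin, hp, Nat.add_left_cancel_iff] at hcard
  simp only [sgn, Finset.sum_ite, Finset.sum_const, hp, hcard, nsmul_eq_mul, mul_one, mul_neg,
    sub_eq_add_neg]

lemma SModEq.smul_of_tower {R S M : Type*} [Ring R] [AddCommGroup M] [Module R M] [SMul S R]
    [SMul S M] [IsScalarTower S R M] {N : Submodule R M} {x y : M} (h : x ≡ y [SMOD N]) (c : S) :
    c • x ≡ c • y [SMOD N] := by
  rw [SModEq.def, Submodule.Quotient.mk_smul, Submodule.Quotient.mk_smul, h]

section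

variable {m n ℓ : ℕ} {p : Fin (m + n) → ZMod 2}

lemma gen_sModEq_chiv {a b : Box m n ℓ} (h : (b.2 : ℕ) < a.2) :
    gen m n ℓ p a b ≡ algebraMap ℂ (U m n ℓ p) (chiv m n ℓ p a b) [SMOD Ichi m n ℓ p] :=
  SModEq.sub_mem.mpr (Ideal.subset_span ⟨a, b, h, rfl⟩)

lemma mul_gen_sModEq_chiv_smul (x : U m n ℓ p) {a b : Box m n ℓ} (h : (b.2 : ℕ) < a.2) :
    x * gen m n ℓ p a b ≡ chiv m n ℓ p a b • x [SMOD Ichi m n ℓ p] := by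
  simpa only [smul_eq_mul, ← Algebra.commutes, ← Algebra.smul_def] using
    (gen_sModEq_chiv h).smul x

lemma chiv_of_val_eq_succ (i k : Fin (m + n)) {c c' : Fin ℓ} (hc : (c : ℕ) = c' + 1) :
    chiv m n ℓ p (i, c) (k, c') = if i = k then sgn (p i) else 0 := by
  simp [chiv, hc]

lemma Phi_ι_single_apply (a b : Fin ℓ) (i j : Fin (m + n)) :
    Phi m n ℓ p (TensorAlgebra.ι ℂ (Matrix.single a b 1)) i j =
      sgn (p i) • gen m n ℓ p (i, a) (j, b) := by
  simp [Phi, tMat, Matrix.single_apply, ite_and, ite_smul]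

lemma Phi_ι_single_mul_ι_single_apply (a b c e : Fin ℓ) (i j : Fin (m + n)) :
    Phi m n ℓ p (TensorAlgebra.ι ℂ (Matrix.single a b 1) * TensorAlgebra.ι ℂ (Matrix.single c e 1))
        i j =
      ∑ k, (sgn (p i) * sgn (p k)) • (gen m n ℓ p (i, a) (k, b) * gen m n ℓ p (k, c) (j, e)) := by
  simp only [map_mul, Matrix.mul_apply, Phi_ι_single_apply, smul_mul_smul]

variable {c c' : Fin ℓ}

theorem Phi_ι_single_sModEq_of_val_eq_succ (hc : (c : ℕ) = c' + 1) (i j : Fin (m + n)) :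
    Phi m n ℓ p (TensorAlgebra.ι ℂ (Matrix.single c c' 1)) i j ≡
      if i = j then 1 else 0 [SMOD Ichi m n ℓ p] := by
  rw [Phi_ι_single_apply]
  calc sgn (p i) • gen m n ℓ p (i, c) (j, c')
      ≡ sgn (p i) • algebraMap ℂ (U m n ℓ p) (chiv m n ℓ p (i, c) (j, c')) [SMOD Ichi m n ℓ p] :=
        (gen_sModEq_chiv (by simp [hc])).smul_of_tower _
    _ = if i = j then 1 else 0 := by
      rw [chiv_of_val_eq_succ i j hc]
      split_ifs <;> simp [Algebra.algebraMap_eq_smul_one, smul_smul, sgn_mul_self]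

lemma gen_mul_gen_sModEq_of_val_eq_succ (hc : (c : ℕ) = c' + 1) (i k j : Fin (m + n)) :
    gen m n ℓ p (i, c) (k, c') * gen m n ℓ p (k, c) (j, c) ≡
      (if i = k then sgn (p i) • gen m n ℓ p (i, c) (j, c) else 0) -
        (if i = j then sgn (p i) • 1 else 0) [SMOD Ichi m n ℓ p] := by
  have hne : ((k, c') : Box m n ℓ) ≠ (k, c) := by simp [Fin.ext_iff, hc]
  have hlt : ((k, c') : Box m n ℓ).2.val < ((i, c) : Box m n ℓ).2.val := by simp [hc]
  set s := sgn ((p i + p k) * (p k + p j))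
  calc gen m n ℓ p (i, c) (k, c') * gen m n ℓ p (k, c) (j, c)
      = s • (gen m n ℓ p (k, c) (j, c) * gen m n ℓ p (i, c) (k, c')) -
          (if i = j then s • gen m n ℓ p (k, c) (k, c') else 0) := by
        rw [gen_mul_gen, if_neg hne, add_zero]
        simp [smul_ite, s]
    _ ≡ s • (chiv m n ℓ p (i, c) (k, c') • gen m n ℓ p (k, c) (j, c)) -
          (if i = j then s • algebraMap ℂ _ (chiv m n ℓ p (k, c) (k, c')) else 0)
          [SMOD Ichi m n ℓ p] := by
        refine ((mul_gen_sModEq_chiv_smul _ hlt).smul_of_tower s).sub ?_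
        split_ifs
        · exact (gen_sModEq_chiv (by simp [hc])).smul_of_tower s
        · exact .rfl
    _ = _ := by
      simp only [chiv_of_val_eq_succ _ _ hc, s]
      split_ifs <;> subst_vars <;>
        simp [sgn_add_self_mul, sgn_add_mul_add_comm, Algebra.algebraMap_eq_smul_one, smul_smul,
          mul_assoc, sgn_mul_self]

theorem Phi_ι_single_mul_ι_single_sModEq_of_val_eq_succ
    (hp : (Finset.univ.filter fun i => p i = 0).card = m) (hc : (c : ℕ) = c' + 1)
    (i j : Fin (m + n)) :
    Phi m n ℓ p
        (TensorAlgebra.ι ℂ (Matrix.single c c' 1) * TensorAlgebra.ι ℂ (Matrix.single c c 1)) i j ≡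
      Phi m n ℓ p (TensorAlgebra.ι ℂ (Matrix.single c c 1)) i j -
        (if i = j then (m : ℂ) - n else 0) • 1 [SMOD Ichi m n ℓ p] := by
  rw [Phi_ι_single_mul_ι_single_apply, Phi_ι_single_apply]
  calc _ ≡ ∑ k, (sgn (p i) * sgn (p k)) •
        ((if i = k then sgn (p i) • gen m n ℓ p (i, c) (j, c) else 0) -
          (if i = j then sgn (p i) • 1 else 0)) [SMOD Ichi m n ℓ p] :=
        SModEq.sum fun k _ => (gen_mul_gen_sModEq_of_val_eq_succ hc i k j).smul_of_tower _
    _ = _ := by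
      simp only [smul_sub, Finset.sum_sub_distrib, smul_ite, smul_zero, Finset.sum_ite_eq,
        Finset.mem_univ, if_true, smul_smul]
      rw [sgn_mul_self, one_mul]
      congr 1
      split_ifs
      · rw [← sum_sgn p hp, Finset.sum_smul]
        exact Finset.sum_congr rfl fun k _ => by rw [mul_right_comm, sgn_mul_self, one_mul]
      · simp

end

/-- Here `d` is the 0-based column `c - 1`, so `e_{c+1,c}` is `Matrix.single ⟨d + 1, hd⟩ d 1`. -/
theorem stmt4_general (m n ℓ : ℕ)
    (p : Fin (m + n) → ZMod 2)
    (hp : (Finset.univ.filter fun i => p i = 0).card = m)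
    (i j : Fin (m + n)) (d : Fin ℓ) (hd : (d : ℕ) + 1 < ℓ) :
    (Phi m n ℓ p (TensorAlgebra.ι ℂ (Matrix.single (⟨(d : ℕ) + 1, hd⟩ : Fin ℓ) d 1)) i j -
        (if i = j then (1 : U m n ℓ p) else 0) ∈ Ichi m n ℓ p) ∧
    (Phi m n ℓ p
          (TensorAlgebra.ι ℂ (Matrix.single (⟨(d : ℕ) + 1, hd⟩ : Fin ℓ) d 1) *
            TensorAlgebra.ι ℂ
              (Matrix.single (⟨(d : ℕ) + 1, hd⟩ : Fin ℓ) (⟨(d : ℕ) + 1, hd⟩ : Fin ℓ) 1)) i j +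
        ρC m n ℓ (⟨(d : ℕ) + 1, hd⟩ : Fin ℓ) •
          Phi m n ℓ p (TensorAlgebra.ι ℂ (Matrix.single (⟨(d : ℕ) + 1, hd⟩ : Fin ℓ) d 1)) i j -
        Phi m n ℓ p
          (TensorAlgebra.ι ℂ
            (Matrix.single (⟨(d : ℕ) + 1, hd⟩ : Fin ℓ) (⟨(d : ℕ) + 1, hd⟩ : Fin ℓ) 1)) i j -
        (if i = j then ρC m n ℓ d else 0) • (1 : U m n ℓ p) ∈ Ichi m n ℓ p) := by
  set c : Fin ℓ := ⟨d + 1, hd⟩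
  have hc : (c : ℕ) = d + 1 := rfl
  have hρ : ρC m n ℓ c - ρC m n ℓ d = m - n := by
    simp only [ρC, hc]
    push_cast
    ring
  refine ⟨SModEq.sub_mem.mp (Phi_ι_single_sModEq_of_val_eq_succ hc i j), SModEq.zero.mp ?_⟩
  calc _ ≡ (Phi m n ℓ p (TensorAlgebra.ι ℂ (Matrix.single c c 1)) i j -
          (if i = j then (m : ℂ) - n else 0) • 1) +
        ρC m n ℓ c • (if i = j then 1 else 0) -
        Phi m n ℓ p (TensorAlgebra.ι ℂ (Matrix.single c c 1)) i j -
        (if i = j then ρC m n ℓ d else 0) • 1 [SMOD Ichi m n ℓ p] :=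
      (((Phi_ι_single_mul_ι_single_sModEq_of_val_eq_succ hp hc i j).add
        ((Phi_ι_single_sModEq_of_val_eq_succ hc i j).smul_of_tower _)).sub .rfl).sub .rfl
    _ = 0 := by
      split_ifs
      · rw [← hρ]
        module
      · simp

/-- for `1 ≤ c ≤ ℓ-1` (we write `d` for the 0-based column `c-1`,
so `e_{c+1,c}` is the matrix unit `stdBasisMatrix d1 d 1` with `d1 = d+1`) both
(i) `t_{ij}(e_{c+1,c}) - δ_{ij}` and
(ii) `t_{ij}(e_{c+1,c} ⊗ e_{c+1,c+1}) + ρ_{c+1} t_{ij}(e_{c+1,c}) - t_{ij}(e_{c+1,c+1}) - δ_{ij} ρ_c`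
lie in the left ideal `I_χ`; equivalently
`t_{ij}(e_{c+1,c}(u + e_{c+1,c+1} + ρ_{c+1})) ≡ t_{ij}(u + e_{c+1,c+1} + ρ_c)`
modulo `I_χ[u]`. -/
theorem stmt4 (m n ℓ : ℕ) (hℓ : 0 < ℓ) (hmn : 0 < m + n)
    (p : Fin (m + n) → ZMod 2)
    (hp : (Finset.univ.filter fun i => p i = 0).card = m)
    (i j : Fin (m + n)) (d : Fin ℓ) (hd : (d : ℕ) + 1 < ℓ) :
    (Phi m n ℓ p (TensorAlgebra.ι ℂ (Matrix.single (⟨(d : ℕ) + 1, hd⟩ : Fin ℓ) d 1)) i j -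
        (if i = j then (1 : U m n ℓ p) else 0) ∈ Ichi m n ℓ p) ∧
    (Phi m n ℓ p
          (TensorAlgebra.ι ℂ (Matrix.single (⟨(d : ℕ) + 1, hd⟩ : Fin ℓ) d 1) *
            TensorAlgebra.ι ℂ
              (Matrix.single (⟨(d : ℕ) + 1, hd⟩ : Fin ℓ) (⟨(d : ℕ) + 1, hd⟩ : Fin ℓ) 1)) i j +
        ρC m n ℓ (⟨(d : ℕ) + 1, hd⟩ : Fin ℓ) •
          Phi m n ℓ p (TensorAlgebra.ι ℂ (Matrix.single (⟨(d : ℕ) + 1, hd⟩ : Fin ℓ) d 1)) i j -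
        Phi m n ℓ p
          (TensorAlgebra.ι ℂ
            (Matrix.single (⟨(d : ℕ) + 1, hd⟩ : Fin ℓ) (⟨(d : ℕ) + 1, hd⟩ : Fin ℓ) 1)) i j -
        (if i = j then ρC m n ℓ d else 0) • (1 : U m n ℓ p) ∈ Ichi m n ℓ p) :=
  stmt4_general m n ℓ p hp i j d hd

end
end

section
/- Fix 1 ≤ c ≤ ℓ−1 and let B be the (ℓ−c+1)×(ℓ−c+1) matrix over R[u] with entries: B_{1,1} = 1 and B_{1,j} = x_{c+1,c+j−1} for 2 ≤ j ≤ ℓ−c+1; B_{2,1} = 1, B_{2,2} = u + x_{c+1,c+1} + ρ_c, and B_{2,j} = x_{c+1,c+j−1} for 3 ≤ j ≤ ℓ−c+1; and B_{i,j} = A(u)_{c+i−1,c+j−1} for 3 ≤ i ≤ ℓ−c+1 and all 1 ≤ j ≤ ℓ−c+1. Then rdet B = (u+ρ_c)·rdet A_{c+2,ℓ}(u). -/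
open scoped BigOperators
open Polynomial

noncomputable section

/-- The row determinant of a `k × k` matrix over a (possibly noncommutative)
unital ring: `rdet B = Σ_σ sgn(σ) B_{1,σ(1)} ⋯ B_{k,σ(k)}` (product taken in
increasing row order); the `rdet` of the empty matrix is `1`. -/
def rdet {k : ℕ} {R : Type*} [Ring R] (B : Matrix (Fin k) (Fin k) R) : R :=
  ∑ σ : Equiv.Perm (Fin k),
    ((Equiv.Perm.sign σ : ℤ) : R) * (List.ofFn fun t => B t (σ t)).prod

/-- `ρ_r = -(ℓ-r)(m-n)` (here `r` is the 1-based index). -/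
def ρv (m n ℓ : ℕ) (r : ℕ) : ℂ :=
  -(((ℓ : ℂ) - (r : ℂ)) * ((m : ℂ) - (n : ℂ)))

/-- The `(a,b)` entry (1-based indices) of the matrix `A(u)` over `R[u]`:
`A(u)_{a,a} = u + x_{a,a} + ρ_a`, `A(u)_{a,b} = x_{a,b}` for `b > a`,
`A(u)_{a+1,a} = 1` and `A(u)_{a,b} = 0` for `a > b+1`. -/
def Aent (m n ℓ : ℕ) (R : Type*) [Ring R] [Algebra ℂ R] (x : ℕ → ℕ → R)
    (a b : ℕ) : Polynomial R :=
  if a = b then X + C (x a a) + C (algebraMap ℂ R (ρv m n ℓ a))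
  else if a < b then C (x a b)
  else if a = b + 1 then 1 else 0

/-!
Write the second row of `B` as its first row plus `(u + ρ_c) e₂` and use additivity of `rdet` in
that row. In the first summand rows 1 and 2 coincide and the first column is `(1, 1, 0, …, 0)`, so
a nonzero term takes its first-column entry `1` from row 1 or row 2; hence composing the
permutation with the transposition `(1 2)` keeps the product and flips the sign, and the summand
vanishes. In the second summand the first column is `(1, 0, …, 0)`, and after deleting it the
first row is `(u + ρ_c, 0, …, 0)`; expanding twice leaves `(u + ρ_c) · rdet A_{c+2,ℓ}(u)`.
-/

open Equiv Equiv.Perm Finset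

section

variable {S : Type*} [Ring S]

lemma List.prod_ofFn_succ_succ {d : ℕ} (f : Fin (d + 2) → S) :
    (List.ofFn f).prod = f 0 * (f 1 * (List.ofFn fun t : Fin d => f t.succ.succ).prod) := by
  rw [List.ofFn_succ, List.prod_cons, List.ofFn_succ, List.prod_cons, Fin.succ_zero_eq_one]

lemma rdet_updateRow_add {k : ℕ} (N : Matrix (Fin k) (Fin k) S) (i : Fin k) (a b : Fin k → S) :
    rdet (N.updateRow i (a + b)) = rdet (N.updateRow i a) + rdet (N.updateRow i b) := by
  simp only [rdet, ← Finset.sum_add_distrib, ← mul_add]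
  refine Finset.sum_congr rfl fun σ _ => congrArg _ ?_
  have hupd : ∀ v : Fin k → S, (fun t => N.updateRow i v t (σ t)) =
      Function.update (fun t => N t (σ t)) i (v (σ i)) := by
    intro v; ext t; rcases eq_or_ne t i with rfl | h <;> simp [*]
  simp only [hupd, Pi.add_apply]
  exact (MultilinearMap.mkPiAlgebraFin ℤ k S).map_update_add _ i _ _

lemma rdet_succ_eq_of_prod_eq_zero {k : ℕ} (N : Matrix (Fin (k + 1)) (Fin (k + 1)) S)
    (h : ∀ σ : Perm (Fin (k + 1)), σ 0 ≠ 0 → (List.ofFn fun t => N t (σ t)).prod = 0) :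
    rdet N = N 0 0 * rdet (N.submatrix Fin.succ Fin.succ) := by
  rw [rdet, ← (decomposeFin.symm).sum_comp, Fintype.sum_prod_type, Fin.sum_univ_succ]
  have hvanish : ∀ (p : Fin k) (τ : Perm (Fin k)),
      (List.ofFn fun t => N t (decomposeFin.symm (p.succ, τ) t)).prod = 0 := fun p τ =>
    h _ (by simp [decomposeFin_symm_apply_zero])
  simp only [hvanish, mul_zero, sum_const_zero, add_zero, rdet, mul_sum]
  refine sum_congr rfl fun τ _ => ?_
  simp [decomposeFin.symm_sign, List.ofFn_succ, decomposeFin_symm_apply_zero,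
    decomposeFin_symm_apply_succ, ← mul_assoc, (Int.cast_commute _ (N 0 0)).eq]

lemma rdet_succ_eq_of_col_zero_eq_zero {k : ℕ} (N : Matrix (Fin (k + 1)) (Fin (k + 1)) S)
    (h : ∀ i : Fin k, N i.succ 0 = 0) :
    rdet N = N 0 0 * rdet (N.submatrix Fin.succ Fin.succ) := by
  refine rdet_succ_eq_of_prod_eq_zero N fun σ hσ => List.prod_eq_zero ?_
  obtain ⟨i, hi⟩ := Fin.exists_succ_eq.mpr fun h0 : σ⁻¹ 0 = 0 =>
    hσ (inv_eq_iff_eq.mp h0).symm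
  exact List.mem_ofFn.mpr ⟨i.succ, by simpa [hi] using h i⟩

lemma rdet_succ_eq_of_row_zero_eq_zero {k : ℕ} (N : Matrix (Fin (k + 1)) (Fin (k + 1)) S)
    (h : ∀ j : Fin k, N 0 j.succ = 0) :
    rdet N = N 0 0 * rdet (N.submatrix Fin.succ Fin.succ) := by
  refine rdet_succ_eq_of_prod_eq_zero N fun σ hσ => ?_
  obtain ⟨j, hj⟩ := Fin.exists_succ_eq.mpr hσ
  rw [List.ofFn_succ, List.prod_cons, ← hj, h, zero_mul]

lemma Fin.eq_zero_or_eq_one_or_eq_succ_succ {d : ℕ} (i : Fin (d + 2)) :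
    i = 0 ∨ i = 1 ∨ ∃ t : Fin d, i = t.succ.succ := by
  rcases Fin.eq_zero_or_eq_succ i with h0 | ⟨j, rfl⟩
  · exact .inl h0
  rcases Fin.eq_zero_or_eq_succ j with h0 | ⟨t, rfl⟩
  · exact .inr (.inl (by rw [h0, Fin.succ_zero_eq_one]))
  · exact .inr (.inr ⟨t, rfl⟩)

lemma rdet_eq_zero_of_row_zero_eq_row_one {d : ℕ} (N : Matrix (Fin (d + 2)) (Fin (d + 2)) S)
    (hrow : N 0 = N 1) (hcomm : ∀ j, Commute (N 0 0) (N 0 j))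
    (hcol : ∀ t : Fin d, N t.succ.succ 0 = 0) : rdet N = 0 := by
  have h01 : (0 : Fin (d + 2)) ≠ 1 := zero_ne_one
  have hprod : ∀ σ : Perm (Fin (d + 2)),
      (List.ofFn fun t => N t ((σ * swap 0 1 : Perm _) t)).prod =
        (List.ofFn fun t => N t (σ t)).prod := by
    intro σ
    have hfix : ∀ t : Fin d, (σ * swap 0 1 : Perm _) t.succ.succ = σ t.succ.succ := fun t =>
      congrArg σ (swap_apply_of_ne_of_ne (Fin.succ_ne_zero _) (Fin.succ_succ_ne_one t))
    have hrow' : ∀ j, N 1 j = N 0 j := fun j => (congrFun hrow j).symm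
    rw [List.prod_ofFn_succ_succ, List.prod_ofFn_succ_succ]
    simp only [hfix, Perm.mul_apply, swap_apply_left, swap_apply_right, hrow']
    rcases Fin.eq_zero_or_eq_one_or_eq_succ_succ (σ⁻¹ 0) with h | h | ⟨t, ht⟩
    · rw [(Perm.inv_eq_iff_eq.mp h).symm, ← mul_assoc, ← mul_assoc, (hcomm _).eq]
    · rw [(Perm.inv_eq_iff_eq.mp h).symm, ← mul_assoc, ← mul_assoc, (hcomm _).eq]
    · have hP : (List.ofFn fun t : Fin d => N t.succ.succ (σ t.succ.succ)).prod = 0 :=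
        List.prod_eq_zero (List.mem_ofFn.mpr ⟨t, by simpa [← ht] using hcol t⟩)
      simp only [hP, mul_zero]
  refine sum_ninvolution (fun σ => σ * swap 0 1) (fun σ => ?_)
    (fun σ _ => mul_ne_left.mpr (swap_eq_one_iff.not.mpr h01)) (fun _ => mem_univ _)
    (fun σ => by simp [mul_assoc])
  rw [hprod, Perm.sign_mul, sign_swap h01]
  push_cast
  rw [mul_neg_one, neg_mul, add_neg_cancel]

lemma rdet_eq_mul_rdet_of_row_one_eq_add_single {d : ℕ}
    (M : Matrix (Fin (d + 2)) (Fin (d + 2)) S) (z : S) (h00 : M 0 0 = 1)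
    (hrow : M 1 = M 0 + Pi.single 1 z) (hcol : ∀ t : Fin d, M t.succ.succ 0 = 0) :
    rdet M = z * rdet (M.submatrix (fun t => t.succ.succ) (fun t => t.succ.succ)) := by
  set M₁ := M.updateRow 1 (Pi.single 1 z)
  have hsplit : rdet M = rdet (M.updateRow 1 (M 0)) + rdet M₁ := by
    rw [← rdet_updateRow_add, ← hrow, Matrix.updateRow_eq_self]
  have hzero : rdet (M.updateRow 1 (M 0)) = 0 :=
    rdet_eq_zero_of_row_zero_eq_row_one _
      (by rw [Matrix.updateRow_self, Matrix.updateRow_ne zero_ne_one])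
      (by simp [Matrix.updateRow_ne, h00, Commute.one_left])
      (by simp [Matrix.updateRow_ne, Fin.succ_succ_ne_one, hcol])
  have hcol₁ : ∀ i : Fin (d + 1), M₁ i.succ 0 = 0 :=
    Fin.cases (by simp [M₁]) (by simp [M₁, Matrix.updateRow_ne, Fin.succ_succ_ne_one, hcol])
  have hrow₁ : ∀ j : Fin d, M₁.submatrix Fin.succ Fin.succ 0 j.succ = 0 := by
    simp [M₁, Pi.single_eq_of_ne, Fin.succ_succ_ne_one]
  have hsub : (M₁.submatrix Fin.succ Fin.succ).submatrix Fin.succ Fin.succ =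
      M.submatrix (fun t => t.succ.succ) (fun t => t.succ.succ) := by
    ext i j
    simp [M₁, Matrix.updateRow_ne, Fin.succ_succ_ne_one]
  rw [hsplit, hzero, zero_add, rdet_succ_eq_of_col_zero_eq_zero M₁ hcol₁,
    rdet_succ_eq_of_row_zero_eq_zero _ hrow₁, hsub]
  simp [M₁, Matrix.updateRow_ne, h00]

end

theorem stmt5_general (m n ℓ : ℕ) (hℓ : 0 < ℓ) (R : Type*) [Ring R] [Algebra ℂ R]
    (x : ℕ → ℕ → R) (c : ℕ) (hc2 : c ≤ ℓ - 1) :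
    rdet (Matrix.of fun i j : Fin (ℓ - c + 1) =>
        if (i : ℕ) = 0 then
          (if (j : ℕ) = 0 then 1 else C (x (c + 1) (c + (j : ℕ))))
        else if (i : ℕ) = 1 then
          (if (j : ℕ) = 0 then 1
           else if (j : ℕ) = 1 then
             X + C (x (c + 1) (c + 1)) + C (algebraMap ℂ R (ρv m n ℓ c))
           else C (x (c + 1) (c + (j : ℕ))))
        else Aent m n ℓ R x (c + (i : ℕ)) (c + (j : ℕ))) =
      (X + C (algebraMap ℂ R (ρv m n ℓ c))) *
        rdet (Matrix.of fun i j : Fin (ℓ - c - 1) =>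
          Aent m n ℓ R x (c + 2 + (i : ℕ)) (c + 2 + (j : ℕ))) := by
  generalize hd : ℓ - c - 1 = d
  rw [show ℓ - c + 1 = d + 2 by omega, rdet_eq_mul_rdet_of_row_one_eq_add_single _
    (X + C (algebraMap ℂ R (ρv m n ℓ c))) (by simp) ?hrow ?hcol]
  case hrow =>
    funext j
    rcases Fin.eq_zero_or_eq_one_or_eq_succ_succ j with rfl | rfl | ⟨t, rfl⟩
    · simp
    · simp only [Matrix.of_apply, Pi.add_apply, Pi.single_eq_same, Fin.val_zero, Fin.val_one,
        one_ne_zero, if_true, if_false]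
      abel
    · simp [Pi.single_eq_of_ne, Fin.succ_succ_ne_one]
  case hcol =>
    intro t
    simp [Aent]
  congr 2
  ext i j : 1
  simp only [Matrix.submatrix_apply, Matrix.of_apply, Fin.val_succ]
  rw [if_neg (by omega), if_neg (by omega)]
  congr 1 <;> omega

/-- for `1 ≤ c ≤ ℓ-1`, the `(ℓ-c+1) × (ℓ-c+1)` matrix `B` obtained
from `A_{c+1,ℓ}(u)` by prepending the row `(1, x_{c+1,c+1}, …, x_{c+1,ℓ})` and
replacing the `(2,2)` entry by `u + x_{c+1,c+1} + ρ_c` satisfies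
`rdet B = (u + ρ_c) ⬝ rdet A_{c+2,ℓ}(u)`. -/
theorem stmt5 (m n ℓ : ℕ) (hℓ : 0 < ℓ) (R : Type*) [Ring R] [Algebra ℂ R]
    (x : ℕ → ℕ → R) (c : ℕ) (hc1 : 1 ≤ c) (hc2 : c ≤ ℓ - 1) :
    rdet (Matrix.of fun i j : Fin (ℓ - c + 1) =>
        if (i : ℕ) = 0 then
          (if (j : ℕ) = 0 then 1 else C (x (c + 1) (c + (j : ℕ))))
        else if (i : ℕ) = 1 then
          (if (j : ℕ) = 0 then 1
           else if (j : ℕ) = 1 then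
             X + C (x (c + 1) (c + 1)) + C (algebraMap ℂ R (ρv m n ℓ c))
           else C (x (c + 1) (c + (j : ℕ))))
        else Aent m n ℓ R x (c + (i : ℕ)) (c + (j : ℕ))) =
      (X + C (algebraMap ℂ R (ρv m n ℓ c))) *
        rdet (Matrix.of fun i j : Fin (ℓ - c - 1) =>
          Aent m n ℓ R x (c + 2 + (i : ℕ)) (c + 2 + (j : ℕ))) :=
  stmt5_general m n ℓ hℓ R x c hc2

end
end

section
/- Fix 1 ≤ c ≤ ℓ−1 and let B′ be the (c+1)×(c+1) matrix over R[u] with entries: B′_{i,j} = A(u)_{i,j} for 1 ≤ i,j ≤ c; B′_{i,c+1} = x_{i,c} for 1 ≤ i ≤ c; B′_{c+1,j} = 0 for 1 ≤ j ≤ c−1; and B′_{c+1,c} = B′_{c+1,c+1} = 1. Then rdet B′ = (u+ρ_c)·rdet A_{1,c−1}(u). -/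
/-!
Column `c` of `B′` minus its last column is `(u + ρ_c) e_c`: above the diagonal both columns
carry `x_{i,c}`, and in the last row both carry `1`. The row determinant is additive in each
column and vanishes when two columns coincide, so column `c` may be replaced by
`(u + ρ_c) e_c`. The last row is then `e_{c+1}`, and once it is deleted the last column is
`(u + ρ_c) e_c`; expanding along both leaves `rdet A_{1,c-1}(u) · (u + ρ_c)`, and `u + ρ_c` is
central in `R[u]`.
-/

open scoped BigOperators
open Polynomial

noncomputable section

namespace List

lemma ofFn_update {M : Type*} {k : ℕ} (F : Fin k → M) (t : Fin k) (v : M) :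
    ofFn (Function.update F t v) = (ofFn F).set t v :=
  ext_getElem (by simp) fun i _ _ => by
    simp [getElem_set, Function.update_apply, Fin.ext_iff, eq_comm]

lemma prod_ofFn_update_add {S : Type*} [Semiring S] {k : ℕ} (F : Fin k → S) (t : Fin k)
    (a b : S) :
    (ofFn (Function.update F t (a + b))).prod
      = (ofFn (Function.update F t a)).prod + (ofFn (Function.update F t b)).prod := by
  simp [ofFn_update, prod_set, mul_add, add_mul]

end List

namespace Equiv.Perm

variable {k : ℕ}

def extendLast (τ : Perm (Fin k)) : Perm (Fin (k + 1)) :=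
  finSuccEquivLast.symm.permCongr τ.optionCongr

def restrictLast (σ : Perm (Fin (k + 1))) : Perm (Fin k) :=
  removeNone (finSuccEquivLast.permCongr σ)

@[simp]
lemma extendLast_castSucc (τ : Perm (Fin k)) (i : Fin k) :
    extendLast τ i.castSucc = (τ i).castSucc := by
  simp [extendLast, permCongr_apply]

@[simp]
lemma extendLast_last (τ : Perm (Fin k)) : extendLast τ (Fin.last k) = Fin.last k := by
  simp [extendLast, permCongr_apply]

@[simp]
lemma sign_extendLast (τ : Perm (Fin k)) : sign (extendLast τ) = sign τ := by
  rw [extendLast, sign_permCongr, optionCongr_sign]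

lemma restrictLast_extendLast (τ : Perm (Fin k)) : restrictLast (extendLast τ) = τ := by
  rw [restrictLast, extendLast, ← permCongr_symm, Equiv.apply_symm_apply, removeNone_optionCongr]

lemma extendLast_restrictLast {σ : Perm (Fin (k + 1))} (h : σ (Fin.last k) = Fin.last k) :
    extendLast (restrictLast σ) = σ := by
  have hnone : finSuccEquivLast.permCongr σ none = none := by simp [permCongr_apply, h]
  rw [extendLast, restrictLast, map_equiv_removeNone, hnone, swap_self, ← one_def, one_mul,
    ← permCongr_symm, Equiv.symm_apply_apply]

end Equiv.Perm

section Rdet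

variable {S : Type*} [Ring S] {k : ℕ}

lemma rdet_updateCol_add (M : Matrix (Fin k) (Fin k) S) (j : Fin k) (f g : Fin k → S) :
    rdet (M.updateCol j (f + g)) = rdet (M.updateCol j f) + rdet (M.updateCol j g) := by
  have diag (σ : Equiv.Perm (Fin k)) (h : Fin k → S) :
      (fun t => M.updateCol j h t (σ t))
        = Function.update (fun t => M t (σ t)) (σ.symm j) (h (σ.symm j)) := by
    funext t
    rcases eq_or_ne t (σ.symm j) with rfl | ht
    · simp
    · have : σ t ≠ j := fun h => ht (by rw [← h, Equiv.symm_apply_apply])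
      simp [this, ht]
  simp only [rdet, ← Finset.sum_add_distrib, ← mul_add, diag, Pi.add_apply,
    List.prod_ofFn_update_add]

lemma rdet_eq_zero_of_col_eq (M : Matrix (Fin k) (Fin k) S) {j₀ j₁ : Fin k} (hne : j₀ ≠ j₁)
    (h : ∀ i, M i j₀ = M i j₁) : rdet M = 0 := by
  refine Finset.sum_ninvolution (fun σ => Equiv.swap j₀ j₁ * σ) (fun σ => ?_) (fun σ _ => ?_)
    (fun _ => Finset.mem_univ _) (fun σ => by rw [← mul_assoc, Equiv.swap_mul_self, one_mul])
  · have hdiag : (fun t => M t ((Equiv.swap j₀ j₁ * σ) t)) = fun t => M t (σ t) := by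
      funext t
      simp only [Equiv.Perm.mul_apply, Equiv.swap_apply_def]
      split_ifs with h0 h1
      · rw [h0, h]
      · rw [h1, h]
      · rfl
    rw [hdiag, Equiv.Perm.sign_mul, Equiv.Perm.sign_swap hne]
    simp
  · rw [Ne, mul_eq_right, Equiv.swap_eq_one_iff]
    exact hne

open Equiv.Perm in
lemma rdet_eq_rdet_submatrix_mul_of_prod_eq_zero (M : Matrix (Fin (k + 1)) (Fin (k + 1)) S)
    (h : ∀ σ : Equiv.Perm (Fin (k + 1)), σ (Fin.last k) ≠ Fin.last k →
      (List.ofFn fun t => M t (σ t)).prod = 0) :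
    rdet M = rdet (M.submatrix Fin.castSucc Fin.castSucc) * M (Fin.last k) (Fin.last k) := by
  have hsupp : ∀ σ ∈ (Finset.univ : Finset (Equiv.Perm (Fin (k + 1)))),
      ((sign σ : ℤ) : S) * (List.ofFn fun t => M t (σ t)).prod ≠ 0 →
        σ (Fin.last k) = Fin.last k :=
    fun σ _ hσ => by_contra fun hfix => hσ (by rw [h σ hfix, mul_zero])
  rw [rdet, rdet, Finset.sum_mul, ← Finset.sum_filter_of_ne hsupp]
  refine Finset.sum_nbij' restrictLast extendLast (by simp) (by simp)
    (fun σ hσ => extendLast_restrictLast (Finset.mem_filter.mp hσ).2)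
    (fun τ _ => restrictLast_extendLast τ) fun σ hσ => ?_
  obtain ⟨τ, rfl⟩ : ∃ τ, extendLast τ = σ :=
    ⟨_, extendLast_restrictLast (Finset.mem_filter.mp hσ).2⟩
  simp only [restrictLast_extendLast, sign_extendLast, List.ofFn_succ', extendLast_castSucc,
    extendLast_last, List.prod_concat, Matrix.submatrix_apply, mul_assoc]

lemma rdet_eq_rdet_submatrix_mul_of_lastRow (M : Matrix (Fin (k + 1)) (Fin (k + 1)) S)
    (h : ∀ j ≠ Fin.last k, M (Fin.last k) j = 0) :
    rdet M = rdet (M.submatrix Fin.castSucc Fin.castSucc) * M (Fin.last k) (Fin.last k) :=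
  rdet_eq_rdet_submatrix_mul_of_prod_eq_zero M fun _ hσ =>
    List.prod_eq_zero (List.mem_ofFn.mpr ⟨Fin.last k, h _ hσ⟩)

lemma rdet_eq_rdet_submatrix_mul_of_lastCol (M : Matrix (Fin (k + 1)) (Fin (k + 1)) S)
    (h : ∀ i ≠ Fin.last k, M i (Fin.last k) = 0) :
    rdet M = rdet (M.submatrix Fin.castSucc Fin.castSucc) * M (Fin.last k) (Fin.last k) := by
  refine rdet_eq_rdet_submatrix_mul_of_prod_eq_zero M fun σ hσ =>
    List.prod_eq_zero (List.mem_ofFn.mpr ⟨σ.symm (Fin.last k), ?_⟩)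
  have hne : σ.symm (Fin.last k) ≠ Fin.last k := fun h' => hσ (σ.symm_apply_eq.mp h').symm
  rw [σ.apply_symm_apply, h _ hne]

lemma rdet_eq_of_col_eq_single_add_last (M : Matrix (Fin (k + 2)) (Fin (k + 2)) S) (r : S)
    (hcol : ∀ i, M i (Fin.last k).castSucc
      = (Pi.single (Fin.last k).castSucc r : Fin (k + 2) → S) i + M i (Fin.last (k + 1)))
    (hrow : ∀ j : Fin k, M (Fin.last (k + 1)) j.castSucc.castSucc = 0) :
    rdet M = rdet (M.submatrix (Fin.castSucc ∘ Fin.castSucc) (Fin.castSucc ∘ Fin.castSucc))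
      * r * M (Fin.last (k + 1)) (Fin.last (k + 1)) := by
  set j₀ : Fin (k + 2) := (Fin.last k).castSucc
  set D := M.updateCol j₀ (Pi.single j₀ r : Fin (k + 2) → S)
  have hj₀ : j₀ ≠ Fin.last (k + 1) := (Fin.castSucc_lt_last _).ne
  have hD : rdet M = rdet D := by
    have hsplit : M = M.updateCol j₀
        ((Pi.single j₀ r : Fin (k + 2) → S) + fun i => M i (Fin.last (k + 1))) := by
      ext i j
      rcases eq_or_ne j j₀ with rfl | hj
      · simp [hcol]
      · simp [hj]
    have hrep : rdet (M.updateCol j₀ fun i => M i (Fin.last (k + 1))) = 0 :=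
      rdet_eq_zero_of_col_eq _ hj₀ fun i => by simp [hj₀.symm]
    rw [hsplit, rdet_updateCol_add, hrep, add_zero]
  have hrowD : ∀ j ≠ Fin.last (k + 1), D (Fin.last (k + 1)) j = 0 := by
    intro j hj
    induction j using Fin.lastCases with
    | last => exact absurd rfl hj
    | cast j =>
      induction j using Fin.lastCases with
      | last => simp [D, j₀, hj₀.symm]
      | cast j => simp [D, j₀, hrow]
  have hcolD : ∀ i ≠ Fin.last k, D.submatrix Fin.castSucc Fin.castSucc i (Fin.last k) = 0 := by
    intro i hi
    simp [D, j₀, hi]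
  rw [hD, rdet_eq_rdet_submatrix_mul_of_lastRow D hrowD,
    rdet_eq_rdet_submatrix_mul_of_lastCol _ hcolD]
  have hsub : D.submatrix (Fin.castSucc ∘ Fin.castSucc) (Fin.castSucc ∘ Fin.castSucc)
      = M.submatrix (Fin.castSucc ∘ Fin.castSucc) (Fin.castSucc ∘ Fin.castSucc) := by
    ext i j
    simp [D, j₀, (Fin.castSucc_lt_last j).ne]
  simp [← hsub, D, j₀, hj₀.symm]

end Rdet

lemma Polynomial.commute_X_add_C_algebraMap {K A : Type*} [CommSemiring K] [Semiring A]
    [Algebra K A] (a : K) (p : A[X]) : Commute (X + C (algebraMap K A a)) p :=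
  (commute_X p).add_left (algebraMap_apply (A := A) a ▸ Algebra.commute_algebraMap_left a p)

theorem stmt6_general (m n ℓ : ℕ) (R : Type*) [Ring R] [Algebra ℂ R]
    (x : ℕ → ℕ → R) (c : ℕ) (hc1 : 1 ≤ c) :
    rdet (Matrix.of fun i j : Fin (c + 1) =>
        if (i : ℕ) < c then
          (if (j : ℕ) < c then Aent m n ℓ R x ((i : ℕ) + 1) ((j : ℕ) + 1)
           else C (x ((i : ℕ) + 1) c))
        else (if (j : ℕ) + 1 < c then 0 else 1)) =
      (X + C (algebraMap ℂ R (ρv m n ℓ c))) *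
        rdet (Matrix.of fun i j : Fin (c - 1) =>
          Aent m n ℓ R x ((i : ℕ) + 1) ((j : ℕ) + 1)) := by
  obtain ⟨k, rfl⟩ : ∃ k, c = k + 1 := ⟨c - 1, by omega⟩
  rw [rdet_eq_of_col_eq_single_add_last (k := k) _ (X + C (algebraMap ℂ R (ρv m n ℓ (k + 1))))
    ?col ?row]
  · rw [← (Polynomial.commute_X_add_C_algebraMap _ _).eq]
    simp only [Matrix.of_apply, Fin.val_last, lt_irrefl, if_false, add_lt_iff_neg_left,
      Nat.not_lt_zero, mul_one]
    congr 2
    ext i j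
    simp
  case col =>
    intro i
    induction i using Fin.lastCases with
    | last => simp [(Fin.castSucc_lt_last (Fin.last k)).ne']
    | cast i =>
      induction i using Fin.lastCases with
      | last => simp [Aent, add_right_comm]
      | cast i =>
        simp [Aent, i.isLt.ne, (Fin.castSucc_lt_last i).ne]
  case row => simp

/-- for `1 ≤ c ≤ ℓ-1`, the `(c+1) × (c+1)` matrix `B'` obtained
from `A_{1,c}(u)` by appending the column `(x_{1,c}, …, x_{c,c})` and the row
`(0, …, 0, 1, 1)` satisfies `rdet B' = (u + ρ_c) ⬝ rdet A_{1,c-1}(u)`. -/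
theorem stmt6 (m n ℓ : ℕ) (hℓ : 0 < ℓ) (R : Type*) [Ring R] [Algebra ℂ R]
    (x : ℕ → ℕ → R) (c : ℕ) (hc1 : 1 ≤ c) (hc2 : c ≤ ℓ - 1) :
    rdet (Matrix.of fun i j : Fin (c + 1) =>
        if (i : ℕ) < c then
          (if (j : ℕ) < c then Aent m n ℓ R x ((i : ℕ) + 1) ((j : ℕ) + 1)
           else C (x ((i : ℕ) + 1) c))
        else (if (j : ℕ) + 1 < c then 0 else 1)) =
      (X + C (algebraMap ℂ R (ρv m n ℓ c))) *
        rdet (Matrix.of fun i j : Fin (c - 1) =>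
          Aent m n ℓ R x ((i : ℕ) + 1) ((j : ℕ) + 1)) :=
  stmt6_general m n ℓ R x c hc1

end
end

section
/- For every integer j ≥ −1, the linear map x ↦ e(π)·x − x·e(π) maps g(j) := {x ∈ Mat_J(ℂ) : h(π)x − x h(π) = j·x} surjectively onto g(j+2). -/
open scoped BigOperators

noncomputable section

abbrev MatJ (m n ℓ : ℕ) := Matrix (Box m n ℓ) (Box m n ℓ) ℂ

/-- The matrix unit `E_{a,b}`. -/
def EU (m n ℓ : ℕ) (a b : Box m n ℓ) : MatJ m n ℓ := Matrix.single a b 1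

/-- The rectangular nilpotent element `e(π)`. -/
def ePi (m n ℓ : ℕ) : MatJ m n ℓ :=
  ∑ a : Box m n ℓ, ∑ b : Box m n ℓ,
    if a.1 = b.1 ∧ (b.2 : ℕ) = (a.2 : ℕ) + 1 then EU m n ℓ a b else 0

/-- The semisimple element `h(π)`, diagonal with entry `ℓ+1-2r` at a box in
(1-based) column `r`. -/
def hPi (m n ℓ : ℕ) : MatJ m n ℓ :=
  Matrix.diagonal fun a => (ℓ : ℂ) - 1 - 2 * ((a.2 : ℕ) : ℂ)

/-- `ad h(π)` as a `ℂ`-linear endomorphism of `Mat_J(ℂ)`. -/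
def adH (m n ℓ : ℕ) : MatJ m n ℓ →ₗ[ℂ] MatJ m n ℓ :=
  LinearMap.mulLeft ℂ (hPi m n ℓ) - LinearMap.mulRight ℂ (hPi m n ℓ)

/-- The eigenspace `g(j) = {x | h(π)x - x h(π) = j x}`. -/
def gsp (m n ℓ : ℕ) (j : ℤ) : Submodule ℂ (MatJ m n ℓ) :=
  LinearMap.ker (adH m n ℓ - (j : ℂ) • LinearMap.id)

/-!
Only columns matter: `ad h(π)` scales the `(a, b)` entry by `2 (col b - col a)`, and
`(e x - x e)_{a,b} = x_{(a.1, col a + 1), b} - x_{a, (b.1, col b - 1)}`, entries outside the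
rectangle read as zero. For `y ∈ g(j+2)` take for `x_{a,b}` the sum of the entries of `y` on the
diagonal through `(a, b)` strictly up-left of it,
`x_{a,b} = ∑_{k=1}^{col a} y_{(a.1, col a - k), (b.1, col b + 1 - k)}`.
Each summand has column difference one more than `(a, b)`, so `x ∈ g(j)`, and `e x - x e`
telescopes to `y`. The only boundary issue is `col a = ℓ - 1`, where the first term of the
commutator is missing; there both `y_{a,b}` and the remaining diagonal sum vanish because
`j + 2 > 0` forces `y` to be supported on `col b > col a`.
-/

section

variable {m n ℓ : ℕ}

lemma ePi_apply (a c : Box m n ℓ) :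
    ePi m n ℓ a c = if a.1 = c.1 ∧ (c.2 : ℕ) = (a.2 : ℕ) + 1 then 1 else 0 := by
  simp only [ePi, EU, Matrix.sum_apply, apply_ite (fun M : MatJ m n ℓ => M a c),
    Matrix.single_apply, Matrix.zero_apply]
  rw [Fintype.sum_eq_single a, Fintype.sum_eq_single c] <;> aesop

lemma mem_gsp_iff {x : MatJ m n ℓ} {j : ℤ} :
    x ∈ gsp m n ℓ j ↔
      ∀ a b : Box m n ℓ, 2 * ((b.2 : ℕ) - (a.2 : ℕ) : ℤ) ≠ j → x a b = 0 := by
  have entry (a b : Box m n ℓ) :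
      (adH m n ℓ - (j : ℂ) • (LinearMap.id : MatJ m n ℓ →ₗ[ℂ] MatJ m n ℓ)) x a b =
        ((2 * ((b.2 : ℕ) - (a.2 : ℕ) : ℤ) - j : ℤ) : ℂ) * x a b := by
    simp only [adH, hPi, LinearMap.sub_apply, LinearMap.smul_apply, LinearMap.id_apply,
      LinearMap.mulLeft_apply, LinearMap.mulRight_apply, Matrix.sub_apply, Matrix.smul_apply,
      Matrix.diagonal_mul, Matrix.mul_diagonal, smul_eq_mul]
    push_cast
    ring
  simp only [gsp, LinearMap.mem_ker, ← Matrix.ext_iff.eq, entry, Matrix.zero_apply, mul_eq_zero,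
    Int.cast_eq_zero, sub_eq_zero]
  exact forall₂_congr fun a b => by tauto

def extEntry (x : MatJ m n ℓ) (i : Fin (m + n)) (r : ℤ) (i' : Fin (m + n)) (s : ℤ) : ℂ :=
  if h : 0 ≤ r ∧ r < ℓ ∧ 0 ≤ s ∧ s < ℓ then
    x (i, ⟨r.toNat, by omega⟩) (i', ⟨s.toNat, by omega⟩)
  else 0

lemma extEntry_eq {x : MatJ m n ℓ} {c c' : Box m n ℓ} {i i' : Fin (m + n)} {r s : ℤ}
    (hi : c.1 = i) (hr : ((c.2 : ℕ) : ℤ) = r) (hi' : c'.1 = i')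
    (hs : ((c'.2 : ℕ) : ℤ) = s) :
    extEntry x i r i' s = x c c' := by
  subst hi hr hi' hs
  simp [extEntry]

lemma extEntry_of_neg_right (x : MatJ m n ℓ) (i i' : Fin (m + n)) (r : ℤ) {s : ℤ}
    (hs : s < 0) :
    extEntry x i r i' s = 0 :=
  dif_neg (by omega)

lemma extEntry_eq_zero_of_mem_gsp {x : MatJ m n ℓ} {j : ℤ} (hx : x ∈ gsp m n ℓ j)
    (i i' : Fin (m + n)) {r s : ℤ} (hrs : 2 * (s - r) ≠ j) : extEntry x i r i' s = 0 := by
  unfold extEntry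
  split_ifs with h
  · exact mem_gsp_iff.1 hx _ _ (by simpa [h.1, h.2.2.1] using hrs)
  · rfl

lemma ePi_mul_apply (x : MatJ m n ℓ) (a b : Box m n ℓ) :
    (ePi m n ℓ * x) a b = extEntry x a.1 ((a.2 : ℕ) + 1) b.1 (b.2 : ℕ) := by
  simp only [Matrix.mul_apply, ePi_apply, ite_mul, one_mul, zero_mul]
  by_cases h : (a.2 : ℕ) + 1 < ℓ
  · rw [extEntry_eq (c := (a.1, ⟨_, h⟩)) rfl (by dsimp only; omega) rfl rfl,
      Fintype.sum_eq_single (a.1, ⟨_, h⟩)]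
    · exact if_pos ⟨rfl, rfl⟩
    · intro c hc
      rw [if_neg]
      rintro ⟨h1, h2⟩
      exact hc (Prod.ext h1.symm (Fin.ext h2))
  · rw [extEntry, dif_neg (by omega)]
    refine Finset.sum_eq_zero fun c _ => if_neg ?_
    rintro ⟨-, h2⟩
    exact h (h2 ▸ c.2.2)

lemma mul_ePi_apply (x : MatJ m n ℓ) (a b : Box m n ℓ) :
    (x * ePi m n ℓ) a b = extEntry x a.1 (a.2 : ℕ) b.1 ((b.2 : ℕ) - 1) := by
  simp only [Matrix.mul_apply, ePi_apply, mul_ite, mul_one, mul_zero]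
  by_cases h : 0 < (b.2 : ℕ)
  · rw [extEntry_eq (c := a) (c' := (b.1, ⟨(b.2 : ℕ) - 1, by omega⟩)) rfl rfl rfl
      (by dsimp only; omega), Fintype.sum_eq_single (b.1, ⟨(b.2 : ℕ) - 1, by omega⟩)]
    · exact if_pos ⟨rfl, by dsimp only; omega⟩
    · intro c hc
      rw [if_neg]
      rintro ⟨h1, h2⟩
      exact hc (Prod.ext h1 (Fin.ext (by dsimp only; omega)))
  · rw [extEntry_of_neg_right _ _ _ _ (by omega)]
    refine Finset.sum_eq_zero fun c _ => if_neg ?_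
    omega

def diagSum (y : MatJ m n ℓ) (i : Fin (m + n)) (r : ℤ) (i' : Fin (m + n)) (s : ℤ) : ℂ :=
  ∑ k ∈ Finset.range r.toNat, extEntry y i (r - 1 - k) i' (s - k)

lemma diagSum_succ (y : MatJ m n ℓ) (i i' : Fin (m + n)) {r : ℤ} (hr : 0 ≤ r) (s : ℤ) :
    diagSum y i (r + 1) i' s = extEntry y i r i' s + diagSum y i r i' (s - 1) := by
  rw [diagSum, show (r + 1).toNat = r.toNat + 1 by omega, Finset.sum_range_succ', add_comm, diagSum]
  congr 1
  · simp
  · refine Finset.sum_congr rfl fun k _ => ?_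
    congr 1 <;> push_cast <;> ring

lemma diagSum_of_neg_right (y : MatJ m n ℓ) (i i' : Fin (m + n)) (r : ℤ) {s : ℤ}
    (hs : s < 0) :
    diagSum y i r i' s = 0 :=
  Finset.sum_eq_zero fun k _ => extEntry_of_neg_right _ _ _ _ (by omega)

lemma diagSum_eq_zero_of_mem_gsp {y : MatJ m n ℓ} {j : ℤ} (hy : y ∈ gsp m n ℓ (j + 2))
    (i i' : Fin (m + n)) {r s : ℤ} (hrs : 2 * (s - r) ≠ j) : diagSum y i r i' s = 0 :=
  Finset.sum_eq_zero fun k _ => extEntry_eq_zero_of_mem_gsp hy _ _ (by omega)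

def diagSumMatrix (y : MatJ m n ℓ) : MatJ m n ℓ :=
  Matrix.of fun a b => diagSum y a.1 (a.2 : ℕ) b.1 (b.2 : ℕ)

lemma diagSumMatrix_mem_gsp {y : MatJ m n ℓ} {j : ℤ} (hy : y ∈ gsp m n ℓ (j + 2)) :
    diagSumMatrix y ∈ gsp m n ℓ j :=
  mem_gsp_iff.2 fun _ _ h => diagSum_eq_zero_of_mem_gsp hy _ _ h

lemma extEntry_diagSumMatrix {y : MatJ m n ℓ} {j : ℤ} (hy : y ∈ gsp m n ℓ (j + 2))
    (hj : -1 ≤ j) (i i' : Fin (m + n)) {r s : ℤ} (hr₀ : 0 ≤ r) (hrℓ : r ≤ ℓ)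
    (hs : s < ℓ) :
    extEntry (diagSumMatrix y) i r i' s = diagSum y i r i' s := by
  by_cases hs₀ : s < 0
  · rw [extEntry_of_neg_right _ _ _ _ hs₀, diagSum_of_neg_right _ _ _ _ hs₀]
  by_cases hr : r = ℓ
  · rw [extEntry, dif_neg (by omega), diagSum_eq_zero_of_mem_gsp hy _ _ (by omega)]
  · rw [extEntry, dif_pos (by omega)]
    simp [diagSumMatrix, Int.toNat_of_nonneg hr₀, Int.toNat_of_nonneg (not_lt.1 hs₀)]

lemma ePi_mul_diagSumMatrix_sub {y : MatJ m n ℓ} {j : ℤ} (hy : y ∈ gsp m n ℓ (j + 2))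
    (hj : -1 ≤ j) : ePi m n ℓ * diagSumMatrix y - diagSumMatrix y * ePi m n ℓ = y := by
  ext a b
  have ha := a.2.2
  have hb := b.2.2
  rw [Matrix.sub_apply, ePi_mul_apply, mul_ePi_apply,
    extEntry_diagSumMatrix hy hj _ _ (by omega) (by omega) (by omega),
    extEntry_diagSumMatrix hy hj _ _ (by omega) (by omega) (by omega),
    diagSum_succ _ _ _ (by omega), extEntry_eq rfl rfl rfl rfl, add_sub_cancel_right]

end

theorem stmt13_general (m n ℓ : ℕ) (j : ℤ) (hj : -1 ≤ j) :
    ∀ y ∈ gsp m n ℓ (j + 2), ∃ x ∈ gsp m n ℓ j,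
      ePi m n ℓ * x - x * ePi m n ℓ = y :=
  fun _ hy => ⟨diagSumMatrix _, diagSumMatrix_mem_gsp hy, ePi_mul_diagSumMatrix_sub hy hj⟩

/-- for `j ≥ -1`, `ad e(π)` maps `g(j)` onto `g(j+2)`. -/
theorem stmt13 (m n ℓ : ℕ) (hℓ : 0 < ℓ) (hmn : 0 < m + n) (j : ℤ) (hj : -1 ≤ j) :
    ∀ y ∈ gsp m n ℓ (j + 2), ∃ x ∈ gsp m n ℓ j,
      ePi m n ℓ * x - x * ePi m n ℓ = y :=
  stmt13_general m n ℓ j hj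

end
end
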